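/- Let q be a prime power, m a positive integer, and k_1, ..., k_m positive integers with ∑_{i=1}^m (k_i − 1) ≤ q. Fix a basis a_1, ..., a_m of F_{q^m} over F_q and let ψ(x) = ∑_{j=1}^m a_j x_j. Then for every polynomial φ ∈ F_q[x_1, ..., x_m] whose degree in x_i is at most k_i − 1 for every i, there exists a univariate polynomial f ∈ F_{q^m}[X] of degree at most (∑_{i=1}^m (k_i − 1))·q^{m−1} such that for every x ∈ F_q^m, f(ψ(x)) equals the image of φ(x) under the embedding F_q → F_{q^m}. Consequently, the coordinatewise embedding of every codeword of PRS_{q,m}(q^m, k_1, ..., k_m) is a codeword of the Reed-Solomon code RS_{q^m}(q^m, (∑_{i=1}^m (k_i − 1))·q^{m−1}) with evaluation points ψ(x), x ∈ F_q^m. -/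

import Mathlib

/-!
The `F`-linear endomorphisms of `E` are exactly the `E`-linear combinations of the Frobenius
powers `y ↦ y ^ q ^ i`, `i < m`: these are linearly independent over `E` by Dedekind's lemma,
and there are `m = finrank E (E →ₗ[F] E)` of them. In particular every coordinate functional
of the basis `a` is a linearized polynomial `L j` of degree at most `q ^ (m - 1)`, and
substituting `L j` for `x j` in `φ` gives `f`.
-/

open Polynomial Module

namespace FiniteField

variable {F E : Type*} [Field F] [Fintype F] [Field E] [Finite E] [Algebra F E]

theorem span_frobeniusAlgHom_pow_eq_top :
    Submodule.span E (Set.range fun i : Fin (finrank F E) ↦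
      (frobeniusAlgHom F E ^ (i : ℕ)).toLinearMap) = ⊤ :=
  ((linearIndependent_toLinearMap F E E).comp _ (bijective_frobeniusAlgHom_pow F E).1)
    |>.span_eq_top_of_card_eq_finrank' (by simp [finrank_linearMap_self])

theorem exists_linearMap_eq_sum_mul_pow (T : E →ₗ[F] E) :
    ∃ c : Fin (finrank F E) → E,
      ∀ y, T y = ∑ i, c i * y ^ Fintype.card F ^ (i : ℕ) := by
  obtain ⟨c, hc⟩ := (Submodule.mem_span_range_iff_exists_fun E).1
    (span_frobeniusAlgHom_pow_eq_top (F := F) (E := E) ▸ Submodule.mem_top (x := T))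
  refine ⟨c, fun y ↦ ?_⟩
  simp [← hc, AlgHom.coe_pow, coe_frobeniusAlgHom, pow_iterate]

theorem exists_natDegree_le_eval_eq_linearMap (T : E →ₗ[F] E) :
    ∃ L : E[X], L.natDegree ≤ Fintype.card F ^ (finrank F E - 1) ∧ ∀ y, L.eval y = T y := by
  obtain ⟨c, hc⟩ := exists_linearMap_eq_sum_mul_pow T
  refine ⟨∑ i, C (c i) * X ^ Fintype.card F ^ (i : ℕ), ?_,
    fun y ↦ by simp [hc, eval_finsetSum]⟩
  refine natDegree_sum_le_of_forall_le _ _ fun i _ ↦ (natDegree_C_mul_X_pow_le _ _).trans ?_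
  exact Nat.pow_le_pow_right Fintype.card_pos (by omega)

end FiniteField

namespace MvPolynomial

variable {σ R S : Type*} [Fintype σ] [CommSemiring R] [CommSemiring S] [Algebra R S]

theorem natDegree_aeval_le (φ : MvPolynomial σ R) (L : σ → S[X]) (d D : σ → ℕ)
    (hφ : ∀ i, φ.degreeOf i ≤ d i) (hL : ∀ i, (L i).natDegree ≤ D i) :
    (aeval L φ).natDegree ≤ ∑ i, d i * D i := by
  rw [aeval_def, eval₂_eq]
  refine natDegree_sum_le_of_forall_le _ _ fun n hn ↦ ?_
  calc (algebraMap R S[X] (φ.coeff n) * ∏ i ∈ n.support, L i ^ n i).natDegree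
      ≤ ∑ i ∈ n.support, (L i ^ n i).natDegree := by
        rw [Polynomial.algebraMap_apply]
        exact (natDegree_C_mul_le _ _).trans (natDegree_prod_le _ _)
    _ ≤ ∑ i ∈ n.support, d i * D i := Finset.sum_le_sum fun i _ ↦ natDegree_pow_le.trans <|
        Nat.mul_le_mul ((monomial_le_degreeOf i hn).trans (hφ i)) (hL i)
    _ ≤ ∑ i, d i * D i := Finset.sum_le_sum_of_subset (Finset.subset_univ _)

end MvPolynomial

theorem stmt_9_general {F E : Type*} [Field F] [Fintype F] [Field E] [Fintype E]
    [Algebra F E] (q m : ℕ) (hq : Fintype.card F = q)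
    (hrank : Module.finrank F E = m)
    (k : Fin m → ℕ)
    (a : Module.Basis (Fin m) F E)
    (φ : MvPolynomial (Fin m) F) (hφ : ∀ i, φ.degreeOf i ≤ k i - 1) :
    ∃ f : Polynomial E, f.natDegree ≤ (∑ i, (k i - 1)) * q ^ (m - 1) ∧
      ∀ x : Fin m → F,
        f.eval (∑ j, (a j : E) * algebraMap F E (x j)) =
          algebraMap F E (MvPolynomial.eval x φ) := by
  subst hq hrank
  choose L hL_natDegree hL_eval using fun j ↦
    FiniteField.exists_natDegree_le_eval_eq_linearMap (Algebra.linearMap F E ∘ₗ a.coord j)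
  refine ⟨MvPolynomial.aeval L φ, ?_, fun x ↦ ?_⟩
  · rw [Finset.sum_mul]
    exact φ.natDegree_aeval_le L _ _ hφ hL_natDegree
  set y := ∑ j, (a j : E) * algebraMap F E (x j)
  have hrepr : a.repr y = x := by
    simp_rw [y, mul_comm (a _ : E), ← Algebra.smul_def, a.repr_sum_self]
  have hL_y : (fun j ↦ (L j).eval y) = algebraMap F E ∘ x := by
    ext j
    simp only [hL_eval, LinearMap.coe_comp, Function.comp_apply, Basis.coord_apply, hrepr,
      Algebra.linearMap_apply]
  rw [← Polynomial.coe_aeval_eq_eval, ← MvPolynomial.aeval_eq_eval,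
    ← MvPolynomial.aeval_algebraMap_apply, ← hL_y]
  exact MvPolynomial.comp_aeval_apply (f := L) ((Polynomial.aeval y).restrictScalars F) φ

/-- Let `q` be a prime power, `m` a positive integer, and
`k 1, ..., k m` positive integers with `∑ i, (k i - 1) ≤ q`.  Fix a basis
`a 1, ..., a m` of `F_{q^m}` (here `E`) over `F_q` (here `F`) and let
`ψ x = ∑ j, a j * x j`.  Then for every polynomial `φ ∈ F_q[x 1, ..., x m]`
whose degree in `x i` is at most `k i - 1` for every `i`, there exists a
univariate polynomial `f ∈ F_{q^m}[X]` of degree at most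
`(∑ i, (k i - 1)) * q ^ (m - 1)` such that for every `x ∈ F_q^m`, `f (ψ x)`
equals the image of `φ x` under the embedding `F_q → F_{q^m}`.  Consequently,
the coordinatewise embedding of every codeword of
`PRS_{q,m}(q^m, k 1, ..., k m)` is a codeword of the Reed-Solomon code
`RS_{q^m}(q^m, (∑ i, (k i - 1)) * q ^ (m - 1))` with evaluation points
`ψ x`, `x ∈ F_q^m`. -/
theorem stmt_9 {F E : Type*} [Field F] [Fintype F] [Field E] [Fintype E]
    [Algebra F E] (q m : ℕ) (hq : Fintype.card F = q) (hm : 0 < m)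
    (hrank : Module.finrank F E = m)
    (k : Fin m → ℕ) (hk : ∀ i, 0 < k i) (hkq : ∑ i, (k i - 1) ≤ q)
    (a : Module.Basis (Fin m) F E)
    (φ : MvPolynomial (Fin m) F) (hφ : ∀ i, φ.degreeOf i ≤ k i - 1) :
    ∃ f : Polynomial E, f.natDegree ≤ (∑ i, (k i - 1)) * q ^ (m - 1) ∧
      ∀ x : Fin m → F,
        f.eval (∑ j, (a j : E) * algebraMap F E (x j)) =
          algebraMap F E (MvPolynomial.eval x φ) :=
  stmt_9_general q m hq hrank k a φ hφ
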